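/- Let G be an abelian group and s : G × G → U(1) a bimultiplicative skew-symmetric map (s(g,h)s(h,g) = 1), and define ε : G → ℤ/2ℤ by s(g,g) = exp(πi·ε(g)) (so ε(g) = 0 if s(g,g) = 1 and ε(g) = 1 if s(g,g) = −1). Then the map s̃(g₁,g₂) := s(g₁,g₂)·exp(−πi·ε(g₁)·ε(g₂)) is bimultiplicative, skew-symmetric, and alternating: s̃(g,g) = 1 for all g. -/

import Mathlib

/-!
Skew-symmetry makes the diagonal `g ↦ s g g` multiplicative, since the cross terms
`s g h * s h g` cancel; as `1 ≠ -1` in `ℂ`, this says that `ε` is additive. The sign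
`(-1) ^ (ε g₁ * ε g₂)` is then bimultiplicative and symmetric with diagonal `(-1) ^ ε g`, so
multiplying by it keeps `s` bimultiplicative and skew while cancelling its diagonal exactly.
-/

def zmodTwoSign (R : Type*) [One R] [Neg R] (x : ZMod 2) : R := if x = 0 then 1 else -1

section zmodTwoSign

variable {R : Type*} [Monoid R] [HasDistribNeg R]

theorem ZMod.two_eq_zero_or_one (a : ZMod 2) : a = 0 ∨ a = 1 := by
  revert a; decide

theorem zmodTwoSign_add (a b : ZMod 2) :
    zmodTwoSign R (a + b) = zmodTwoSign R a * zmodTwoSign R b := by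
  rcases a.two_eq_zero_or_one with rfl | rfl <;> rcases b.two_eq_zero_or_one with rfl | rfl <;>
    simp [zmodTwoSign, show (1 + 1 : ZMod 2) = 0 from rfl]

theorem zmodTwoSign_mul_self (a : ZMod 2) : zmodTwoSign R a * zmodTwoSign R a = 1 := by
  rcases a.two_eq_zero_or_one with rfl | rfl <;> simp [zmodTwoSign]

theorem zmodTwoSign_injective (h : (-1 : R) ≠ 1) : Function.Injective (zmodTwoSign R) := by
  intro a b hab
  rcases a.two_eq_zero_or_one with rfl | rfl <;> rcases b.two_eq_zero_or_one with rfl | rfl <;>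
    simp_all [zmodTwoSign, eq_comm]

end zmodTwoSign

section Pairing

variable {G R : Type*} [CommRing R] {s : G → G → R} {ε : G → ZMod 2}

/-- The pairing `s̃(g₁, g₂) = s(g₁, g₂) · (-1) ^ (ε g₁ * ε g₂)`. -/
def twistedPairing (s : G → G → R) (ε : G → ZMod 2) (g₁ g₂ : G) : R :=
  s g₁ g₂ * zmodTwoSign R (ε g₁ * ε g₂)

theorem twistedPairing_mul_swap (hskew : ∀ g h, s g h * s h g = 1) (g h : G) :
    twistedPairing s ε g h * twistedPairing s ε h g = 1 :=
  calc twistedPairing s ε g h * twistedPairing s ε h g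
      = s g h * s h g * (zmodTwoSign R (ε g * ε h) * zmodTwoSign R (ε g * ε h)) := by
        rw [twistedPairing, twistedPairing, mul_comm (ε h)]; ring
    _ = 1 := by rw [hskew, zmodTwoSign_mul_self, mul_one]

theorem twistedPairing_self (hε : ∀ g, s g g = zmodTwoSign R (ε g)) (g : G) :
    twistedPairing s ε g g = 1 := by
  have idem : ∀ x : ZMod 2, x * x = x := by decide
  rw [twistedPairing, hε, idem, zmodTwoSign_mul_self]

variable [Add G]

theorem diag_add_of_skew (hbi₁ : ∀ g₁ g₂ h, s (g₁ + g₂) h = s g₁ h * s g₂ h)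
    (hbi₂ : ∀ g h₁ h₂, s g (h₁ + h₂) = s g h₁ * s g h₂) (hskew : ∀ g h, s g h * s h g = 1)
    (g h : G) : s (g + h) (g + h) = s g g * s h h :=
  calc s (g + h) (g + h) = s g g * s h h * (s g h * s h g) := by rw [hbi₁, hbi₂, hbi₂]; ring
    _ = s g g * s h h := by rw [hskew, mul_one]

theorem grading_add_of_skew (hR : (-1 : R) ≠ 1)
    (hbi₁ : ∀ g₁ g₂ h, s (g₁ + g₂) h = s g₁ h * s g₂ h)
    (hbi₂ : ∀ g h₁ h₂, s g (h₁ + h₂) = s g h₁ * s g h₂) (hskew : ∀ g h, s g h * s h g = 1)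
    (hε : ∀ g, s g g = zmodTwoSign R (ε g)) (g h : G) :
    ε (g + h) = ε g + ε h := by
  apply zmodTwoSign_injective hR
  rw [zmodTwoSign_add, ← hε, ← hε, ← hε, diag_add_of_skew hbi₁ hbi₂ hskew]

theorem twistedPairing_add_left (hbi₁ : ∀ g₁ g₂ h, s (g₁ + g₂) h = s g₁ h * s g₂ h)
    (hε_add : ∀ g h, ε (g + h) = ε g + ε h) (g₁ g₂ h : G) :
    twistedPairing s ε (g₁ + g₂) h = twistedPairing s ε g₁ h * twistedPairing s ε g₂ h := by
  simp only [twistedPairing, hbi₁, hε_add, add_mul, zmodTwoSign_add]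
  ring

theorem twistedPairing_add_right (hbi₂ : ∀ g h₁ h₂, s g (h₁ + h₂) = s g h₁ * s g h₂)
    (hε_add : ∀ g h, ε (g + h) = ε g + ε h) (g h₁ h₂ : G) :
    twistedPairing s ε g (h₁ + h₂) = twistedPairing s ε g h₁ * twistedPairing s ε g h₂ := by
  simp only [twistedPairing, hbi₂, hε_add, mul_add, zmodTwoSign_add]
  ring

end Pairing

theorem graded_commutator_alternating_general (G : Type*) [AddCommGroup G]
    (s : G → G → ℂ)
    (hbi₁ : ∀ g₁ g₂ h : G, s (g₁ + g₂) h = s g₁ h * s g₂ h)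
    (hbi₂ : ∀ g h₁ h₂ : G, s g (h₁ + h₂) = s g h₁ * s g h₂)
    (hskew : ∀ g h : G, s g h * s h g = 1)
    (ε : G → ZMod 2)
    (hε : ∀ g : G, s g g = if ε g = 0 then (1 : ℂ) else (-1 : ℂ)) :
    let st : G → G → ℂ :=
      fun g₁ g₂ => s g₁ g₂ * (if ε g₁ * ε g₂ = 0 then (1 : ℂ) else (-1 : ℂ))
    (∀ g₁ g₂ h : G, st (g₁ + g₂) h = st g₁ h * st g₂ h) ∧
    (∀ g h₁ h₂ : G, st g (h₁ + h₂) = st g h₁ * st g h₂) ∧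
    (∀ g h : G, st g h * st h g = 1) ∧
    (∀ g : G, st g g = 1) := by
  have hε_add : ∀ g h, ε (g + h) = ε g + ε h :=
    grading_add_of_skew (by norm_num) hbi₁ hbi₂ hskew hε
  exact ⟨twistedPairing_add_left hbi₁ hε_add, twistedPairing_add_right hbi₂ hε_add,
    twistedPairing_mul_swap hskew, twistedPairing_self hε⟩

/-- Given a bimultiplicative skew-symmetric `s : G × G → U(1)`
with grading `ε : G → ℤ/2` determined by `s(g,g) = exp(πi·ε(g))`, the modified
map `s̃(g₁,g₂) = s(g₁,g₂)·exp(−πi·ε(g₁)ε(g₂))` is bimultiplicative,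
skew-symmetric, and alternating. -/
theorem graded_commutator_alternating (G : Type*) [AddCommGroup G]
    (s : G → G → ℂ) (hunit : ∀ g h : G, ‖s g h‖ = 1)
    (hbi₁ : ∀ g₁ g₂ h : G, s (g₁ + g₂) h = s g₁ h * s g₂ h)
    (hbi₂ : ∀ g h₁ h₂ : G, s g (h₁ + h₂) = s g h₁ * s g h₂)
    (hskew : ∀ g h : G, s g h * s h g = 1)
    (ε : G → ZMod 2)
    (hε : ∀ g : G, s g g = if ε g = 0 then (1 : ℂ) else (-1 : ℂ)) :
    let st : G → G → ℂ :=
      fun g₁ g₂ => s g₁ g₂ * (if ε g₁ * ε g₂ = 0 then (1 : ℂ) else (-1 : ℂ))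
    (∀ g₁ g₂ h : G, st (g₁ + g₂) h = st g₁ h * st g₂ h) ∧
    (∀ g h₁ h₂ : G, st g (h₁ + h₂) = st g h₁ * st g h₂) ∧
    (∀ g h : G, st g h * st h g = 1) ∧
    (∀ g : G, st g g = 1) :=
  graded_commutator_alternating_general G s hbi₁ hbi₂ hskew ε hε
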